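/- arXiv:2502.07232 — 4 statements merged into one kernel-verified Lean document; each statement's English description precedes it below -/
import Mathlib

section
/- Let X be a set, h : X → {0,1} a hypothesis, C ⊆ X a subset, and d a metric on X. Define nn_C(h)(x) = h(z) for some z minimizing d(x,c) over c ∈ C. Suppose C is an rγ-cover of X (for every x there exists c ∈ C with d(x,c) ≤ rγ). Then for every x, y ∈ X×{0,1}, if there exists z with d(x,z) ≤ r and nn_C(h)(z) ≠ y, then there exists c ∈ C with d(x,c) ≤ r(1+γ) and h(c) ≠ y. -/
theorem dist_le_of_isNearest_of_exists_dist_le {X : Type*} [PseudoMetricSpace X] {C : Set X}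
    {z p : X} {ε : ℝ} (hmin : ∀ c ∈ C, dist z p ≤ dist z c) (hcover : ∃ c ∈ C, dist z c ≤ ε) :
    dist z p ≤ ε := by
  obtain ⟨c, hcC, hc⟩ := hcover
  exact (hmin c hcC).trans hc

theorem stmt0_general {X : Type*} [MetricSpace X] (C : Set X) (h : X → Bool)
    (r γ : ℝ)
    (nn : X → X) (hnnC : ∀ z, nn z ∈ C)
    (hnnmin : ∀ z, ∀ c ∈ C, dist z (nn z) ≤ dist z c)
    (hcover : ∀ x : X, ∃ c ∈ C, dist x c ≤ r * γ) :
    ∀ (x : X) (y : Bool), (∃ z : X, dist x z ≤ r ∧ h (nn z) ≠ y) →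
      ∃ c ∈ C, dist x c ≤ r * (1 + γ) ∧ h c ≠ y := by
  rintro x y ⟨z, hxz, hne⟩
  refine ⟨nn z, hnnC z, ?_, hne⟩
  have hznn : dist z (nn z) ≤ r * γ :=
    dist_le_of_isNearest_of_exists_dist_le (hnnmin z) (hcover z)
  calc dist x (nn z) ≤ dist x z + dist z (nn z) := dist_triangle _ _ _
    _ ≤ r + r * γ := add_le_add hxz hznn
    _ = r * (1 + γ) := by ring

/-- Pointwise loss comparison underlying RERM-and-Discretize: if `C` is an `rγ`-cover
and `nn` selects a nearest point of `C`, then an adversarial error of `nn_C(h)` at radius `r`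
yields an adversarial error of `h` on a point of `C` within radius `r(1+γ)`. -/
theorem stmt0 {X : Type*} [MetricSpace X] (C : Set X) (h : X → Bool)
    (r γ : ℝ) (hr : 0 < r) (hγ : 0 < γ)
    (nn : X → X) (hnnC : ∀ z, nn z ∈ C)
    (hnnmin : ∀ z, ∀ c ∈ C, dist z (nn z) ≤ dist z c)
    (hcover : ∀ x : X, ∃ c ∈ C, dist x c ≤ r * γ) :
    ∀ (x : X) (y : Bool), (∃ z : X, dist x z ≤ r ∧ h (nn z) ≠ y) →
      ∃ c ∈ C, dist x c ≤ r * (1 + γ) ∧ h c ≠ y :=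
  stmt0_general C h r γ nn hnnC hnnmin hcover
end

section
/- Let X be a metric space, h : X → {0,1}, C an rγ-cover of X, U(x) = closed ball of radius r around x, V(x) = closed ball of radius r(1+γ), and 𝒞(x) = C ∩ V(x). Then for every labeled point (x,y), the adversarial loss indicator of nn_C(h) with respect to U at (x,y) is at most the adversarial loss indicator of h with respect to 𝒞 at (x,y), which in turn is at most the adversarial loss indicator of h with respect to V at (x,y). Here the adversarial loss indicator of g with respect to perturbation type W at (x,y) is 1 iff ∃z ∈ W(x) with g(z) ≠ y. -/
/-! A nearest point of an `ε`-cover lies within `ε`, so `nn_C` maps the `r`-ball around `x` into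
`C ∩ B_{r + ε}(x)`; with `ε = rγ` this is `𝒞(x)`, which in turn is contained in `V(x)`. -/

open Metric

section NearestPoint

variable {X : Type*} [PseudoMetricSpace X] {C : Set X} {nn : X → X} {ε : ℝ}

theorem dist_nearest_le (hnnmin : ∀ z, ∀ c ∈ C, dist z (nn z) ≤ dist z c)
    (hcover : ∀ x, ∃ c ∈ C, dist x c ≤ ε) (z : X) : dist z (nn z) ≤ ε := by
  obtain ⟨c, hc, hzc⟩ := hcover z
  exact (hnnmin z c hc).trans hzc

theorem nearest_mem_closedBall_add (hnnmin : ∀ z, ∀ c ∈ C, dist z (nn z) ≤ dist z c)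
    (hcover : ∀ x, ∃ c ∈ C, dist x c ≤ ε) {x z : X} {r : ℝ} (hz : z ∈ closedBall x r) :
    nn z ∈ closedBall x (r + ε) :=
  mem_closedBall.2 <| calc
    dist (nn z) x ≤ dist z (nn z) + dist z x := dist_triangle_left _ _ _
    _ ≤ ε + r := add_le_add (dist_nearest_le hnnmin hcover z) hz
    _ = r + ε := add_comm ε r

end NearestPoint

theorem stmt1_general {X : Type*} [MetricSpace X] (C : Set X) (h : X → Bool)
    (r γ : ℝ)
    (nn : X → X) (hnnC : ∀ z, nn z ∈ C)
    (hnnmin : ∀ z, ∀ c ∈ C, dist z (nn z) ≤ dist z c)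
    (hcover : ∀ x : X, ∃ c ∈ C, dist x c ≤ r * γ) :
    ∀ (x : X) (y : Bool),
      ((∃ z ∈ Metric.closedBall x r, h (nn z) ≠ y) →
        ∃ c ∈ C ∩ Metric.closedBall x (r * (1 + γ)), h c ≠ y) ∧
      ((∃ c ∈ C ∩ Metric.closedBall x (r * (1 + γ)), h c ≠ y) →
        ∃ z ∈ Metric.closedBall x (r * (1 + γ)), h z ≠ y) := by
  intro x y
  have hradius : r * (1 + γ) = r + r * γ := by ring
  refine ⟨fun ⟨z, hz, hne⟩ => ⟨nn z, ⟨hnnC z, ?_⟩, hne⟩,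
    fun ⟨c, ⟨_, hc⟩, hne⟩ => ⟨c, hc, hne⟩⟩
  rw [hradius]
  exact nearest_mem_closedBall_add hnnmin hcover hz

/-- Pointwise chain of adversarial loss inequalities
`ℓ^U(nn_C(h),x,y) ≤ ℓ^𝒞(h,x,y) ≤ ℓ^V(h,x,y)` where `U(x) = B_r(x)`,
`V(x) = B_{r(1+γ)}(x)` and `𝒞(x) = C ∩ V(x)`, stated as implications between
the loss indicators (loss is 1 iff the corresponding existential holds). -/
theorem stmt1 {X : Type*} [MetricSpace X] (C : Set X) (h : X → Bool)
    (r γ : ℝ) (hr : 0 < r) (hγ : 0 < γ)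
    (nn : X → X) (hnnC : ∀ z, nn z ∈ C)
    (hnnmin : ∀ z, ∀ c ∈ C, dist z (nn z) ≤ dist z c)
    (hcover : ∀ x : X, ∃ c ∈ C, dist x c ≤ r * γ) :
    ∀ (x : X) (y : Bool),
      ((∃ z ∈ Metric.closedBall x r, h (nn z) ≠ y) →
        ∃ c ∈ C ∩ Metric.closedBall x (r * (1 + γ)), h c ≠ y) ∧
      ((∃ c ∈ C ∩ Metric.closedBall x (r * (1 + γ)), h c ≠ y) →
        ∃ z ∈ Metric.closedBall x (r * (1 + γ)), h z ≠ y) :=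
  stmt1_general C h r γ nn hnnC hnnmin hcover
end

section
/- Let H ⊆ {0,1}^X be a hypothesis class and C : X → Finset X a perturbation type with |C(x)| ≤ k for all x ∈ X, where k ≥ 2. Define the adversarial loss class H_C ⊆ 2^{X×{0,1}} by h_C = {(x,y) : ∃z ∈ C(x), h(z) ≠ y}. Then the VC dimension of H_C is at most VC(H) · log₂(k) up to a universal constant factor (VC(H_C) = O(VC(H) log k)). -/
/-!
Let `S` be the union of the perturbation sets of the points of `K`, so `|S| ≤ |K| k`. The robust
loss of `h` on `K` only depends on the trace of `h` on `S`, so if the loss class shatters `K`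
then `H` has at least `2 ^ |K|` traces on `S`. By the Sauer–Shelah lemma there are at most
`∑_{i ≤ d} (|S| choose i) ≤ (e |K| k / d) ^ d` of them, and `2 ^ m ≤ (e m k / d) ^ d` forces
`m ≤ 5 d log₂ k`.
-/

open Finset Real

def ShattersFun {Z : Type*} (F : Set (Z → Bool)) (K : Finset Z) : Prop :=
  ∀ T ⊆ K, ∃ f ∈ F, ∀ z ∈ K, (f z = true ↔ z ∈ T)

theorem card_le_sum_choose_of_shatters_card_le {α : Type*} [DecidableEq α]
    {𝒜 : Finset (Finset α)} {S : Finset α} {d : ℕ} (h𝒜 : ∀ A ∈ 𝒜, A ⊆ S)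
    (hd : ∀ s, 𝒜.Shatters s → #s ≤ d) : #𝒜 ≤ ∑ i ∈ range (d + 1), (#S).choose i := by
  simp_rw [← card_powersetCard]
  refine 𝒜.card_le_card_shatterer.trans <|
    (card_le_card fun s hs ↦ mem_biUnion.2 ⟨#s, ?_⟩).trans card_biUnion_le
  obtain ⟨A, hA, hsA⟩ := (mem_shatterer.1 hs).exists_superset
  exact ⟨mem_range.2 (Nat.lt_succ_of_le (hd s (mem_shatterer.1 hs))),
    mem_powersetCard.2 ⟨hsA.trans (h𝒜 A hA), rfl⟩⟩

section Traces

variable {X : Type*}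

open Classical in
noncomputable def traces (H : Set (X → Bool)) (S : Finset X) : Finset (Finset X) :=
  S.powerset.filter fun A ↦ ∃ h ∈ H, ∀ z ∈ S, h z = true ↔ z ∈ A

open Classical in
theorem mem_traces {H : Set (X → Bool)} {S A : Finset X} :
    A ∈ traces H S ↔ A ⊆ S ∧ ∃ h ∈ H, ∀ z ∈ S, h z = true ↔ z ∈ A := by
  rw [traces, mem_filter, mem_powerset]

theorem filter_mem_traces {H : Set (X → Bool)} {h : X → Bool} (hH : h ∈ H) (S : Finset X) :
    S.filter (fun z ↦ h z = true) ∈ traces H S :=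
  mem_traces.2 ⟨filter_subset _ _, h, hH, fun z hz ↦ by simp [hz]⟩

theorem shattersFun_of_shatters_traces [DecidableEq X] {H : Set (X → Bool)} {S s : Finset X}
    (hs : (traces H S).Shatters s) : ShattersFun H s := by
  obtain ⟨A, hA, hsA⟩ := hs.exists_superset
  intro T hT
  obtain ⟨B, hB, rfl⟩ := hs hT
  obtain ⟨-, h, hH, hhB⟩ := mem_traces.1 hB
  exact ⟨h, hH, fun z hz ↦ by rw [hhB z ((mem_traces.1 hA).1 (hsA hz)), mem_inter]; simp [hz]⟩

theorem card_traces_le [DecidableEq X] {H : Set (X → Bool)} {d : ℕ}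
    (hH : ∀ K, ShattersFun H K → #K ≤ d) (S : Finset X) :
    #(traces H S) ≤ ∑ i ∈ range (d + 1), (#S).choose i :=
  card_le_sum_choose_of_shatters_card_le (fun _ hA ↦ (mem_traces.1 hA).1)
    fun _ hs ↦ hH _ (shattersFun_of_shatters_traces hs)

end Traces

section RobustLoss

variable {X : Type*}

def robustLoss (per : X → Finset X) (h : X → Bool) (p : X × Bool) : Bool :=
  decide (∃ z ∈ per p.1, h z ≠ p.2)

theorem robustLoss_congr (per : X → Finset X) {h h' : X → Bool} {p : X × Bool}
    (hh : ∀ z ∈ per p.1, h z = h' z) : robustLoss per h p = robustLoss per h' p := by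
  unfold robustLoss
  exact decide_eq_decide.2 ⟨fun ⟨z, hz, hne⟩ ↦ ⟨z, hz, hh z hz ▸ hne⟩,
    fun ⟨z, hz, hne⟩ ↦ ⟨z, hz, (hh z hz).symm ▸ hne⟩⟩

variable [DecidableEq X]

theorem two_pow_card_le_card_traces {H : Set (X → Bool)} {per : X → Finset X}
    {K : Finset (X × Bool)} (hK : ShattersFun (robustLoss per '' H) K) :
    2 ^ #K ≤ #(traces H (K.biUnion fun p ↦ per p.1)) := by
  set S := K.biUnion fun p ↦ per p.1
  rw [← card_powerset]
  refine le_trans (card_le_card fun T hT ↦ ?_) (card_image_le (f := fun A ↦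
    K.filter fun p ↦ robustLoss per (fun z ↦ decide (z ∈ A)) p = true))
  obtain ⟨-, ⟨h, hH, rfl⟩, hpat⟩ := hK T (mem_powerset.1 hT)
  refine mem_image.2 ⟨_, filter_mem_traces hH S, ?_⟩
  ext p
  by_cases hp : p ∈ K
  · rw [mem_filter, ← hpat p hp, robustLoss_congr per (h' := h) fun z hz ↦ ?_]
    · simp [hp]
    · have hzS : z ∈ S := mem_biUnion.2 ⟨p, hp, hz⟩
      simp [hzS]
  · simpa [hp] using fun hpT ↦ hp (mem_powerset.1 hT hpT)

end RobustLoss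

theorem sum_range_choose_le_exp_mul_div_pow {n d : ℕ} (hd : 0 < d) (hdn : d ≤ n) :
    ∑ i ∈ range (d + 1), (n.choose i : ℝ) ≤ (exp 1 * n / d) ^ d := by
  have hn : (0 : ℝ) < n := by exact_mod_cast hd.trans_le hdn
  set x : ℝ := d / n with hx
  have hx0 : 0 < x := by positivity
  have hx1 : x ≤ 1 := div_le_one_of_le₀ (by exact_mod_cast hdn) hn.le
  have key : x ^ d * ∑ i ∈ range (d + 1), (n.choose i : ℝ) ≤ exp d :=
    calc x ^ d * ∑ i ∈ range (d + 1), (n.choose i : ℝ)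
        ≤ ∑ i ∈ range (d + 1), x ^ i * n.choose i := by
          rw [mul_sum]
          refine sum_le_sum fun i hi ↦ mul_le_mul_of_nonneg_right ?_ (by positivity)
          exact pow_le_pow_of_le_one hx0.le hx1 (Nat.lt_succ_iff.mp (mem_range.mp hi))
      _ ≤ ∑ i ∈ range (n + 1), x ^ i * n.choose i :=
          sum_le_sum_of_subset_of_nonneg (range_subset_range.mpr (by omega))
            fun _ _ _ ↦ by positivity
      _ = (x + 1) ^ n := by simp [add_pow]
      _ ≤ exp x ^ n := by gcongr; linarith [add_one_le_exp x]
      _ = exp d := by rw [← exp_nat_mul, hx, mul_div_cancel₀ _ hn.ne']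
  calc ∑ i ∈ range (d + 1), (n.choose i : ℝ) ≤ exp d / x ^ d := by
        rw [le_div_iff₀ (by positivity)]; linarith
    _ = (exp 1 * n / d) ^ d := by
        rw [← exp_one_pow, hx, div_pow, div_pow, mul_pow]; field_simp

theorem le_mul_logb_of_two_pow_le {m d : ℕ} {k : ℝ} (hd : 0 < d) (hm : 0 < m) (hk : 2 ≤ k)
    (h : (2 : ℝ) ^ m ≤ (exp 1 * (m * k) / d) ^ d) : (m : ℝ) ≤ 5 * d * logb 2 k := by
  have hd' : (0 : ℝ) < d := by exact_mod_cast hd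
  have hm' : (0 : ℝ) < m := by exact_mod_cast hm
  have hk' : (0 : ℝ) < k := by linarith
  have hlog2 : 0.6931471803 < log 2 := log_two_gt_d9
  have hlogk : log 2 ≤ log k := log_le_log two_pos hk
  have hlog : m * log 2 ≤ d * log (exp 1 * (m * k) / d) := by
    simpa only [log_pow] using log_le_log (by positivity) h
  -- `log t ≤ t / 4 - 1 + log 4` (tangent line at `t = 4`), applied to `t = m / d`
  have hsplit : log (exp 1 * (m * k) / d) = 1 + log (m / (4 * d)) + (2 * log 2 + log k) := by
    rw [show exp 1 * (m * k) / d = exp 1 * (m / (4 * d)) * (2 ^ 2 * k) by field_simp; ring,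
      log_mul (by positivity) (by positivity), log_mul (by positivity) (by positivity),
      log_mul (by positivity) hk'.ne', log_exp, log_pow]
    push_cast; ring
  have htangent : d * log (m / (4 * d)) ≤ m / 4 - d := by
    have := log_le_sub_one_of_pos (show (0 : ℝ) < m / (4 * d) by positivity)
    have h' := mul_le_mul_of_nonneg_left this hd'.le
    rwa [mul_sub, mul_one, show (d : ℝ) * (m / (4 * d)) = m / 4 by field_simp] at h'
  rw [logb, mul_div_assoc', le_div_iff₀ (by linarith)]
  nlinarith [mul_le_mul_of_nonneg_left hlog2.le hm'.le, mul_le_mul_of_nonneg_left hlogk hd'.le]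

theorem le_mul_logb_of_two_pow_le_sum_choose {m n d k : ℕ} (hk : 2 ≤ k) (hn : n ≤ m * k)
    (h : 2 ^ m ≤ ∑ i ∈ range (d + 1), n.choose i) : (m : ℝ) ≤ 5 * d * logb 2 k := by
  have hk' : (2 : ℝ) ≤ k := by exact_mod_cast hk
  have hL : 1 ≤ logb 2 (k : ℝ) := (logb_self_eq_one one_lt_two).symm.le.trans
    (logb_le_logb_of_le one_lt_two two_pos hk')
  rcases le_or_gt m d with hmd | hdm
  · have hmd' : (m : ℝ) ≤ d := by exact_mod_cast hmd
    nlinarith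
  have hd : 0 < d := by
    by_contra! hd
    obtain rfl : d = 0 := by omega
    simp only [zero_add, range_one, sum_singleton, Nat.choose_zero_right] at h
    exact absurd h (Nat.one_lt_two_pow (by omega)).not_ge
  have hsum : (2 : ℝ) ^ m ≤ ∑ i ∈ range (d + 1), ((m * k).choose i : ℝ) := by
    exact_mod_cast h.trans (sum_le_sum fun i _ ↦ Nat.choose_le_choose i hn)
  have hdmk : d ≤ m * k := hdm.le.trans (Nat.le_mul_of_pos_right m (by omega))
  refine le_mul_logb_of_two_pow_le hd (by omega) hk' ?_
  simpa using hsum.trans (sum_range_choose_le_exp_mul_div_pow hd hdmk)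

/-- Lemma 2.6 (Attias–Kontorovich–Mansour): if every perturbation set `per x` has at
most `k ≥ 2` elements and `VC(H) ≤ d`, then the VC dimension of the adversarial loss
class `H_C = {(x,y) ↦ [∃ z ∈ per x, h z ≠ y]}` is `O(d log k)`: there is a universal
constant `c` bounding the size of every shattered set by `c · d · log₂ k`. -/
theorem stmt6 : ∃ c : ℝ, 0 < c ∧
    ∀ (X : Type) (H : Set (X → Bool)) (per : X → Finset X) (k d : ℕ),
      2 ≤ k → (∀ x, (per x).card ≤ k) →
      (∀ K : Finset X, ShattersFun H K → K.card ≤ d) →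
      ∀ K : Finset (X × Bool),
        ShattersFun ((fun h => fun p : X × Bool =>
          decide (∃ z ∈ per p.1, h z ≠ p.2)) '' H) K →
        (K.card : ℝ) ≤ c * d * Real.logb 2 k := by
  classical
  refine ⟨5, by norm_num, fun X H per k d hk hper hVC K hK ↦ ?_⟩
  have hS : #(K.biUnion fun p ↦ per p.1) ≤ #K * k :=
    card_biUnion_le_card_mul _ _ _ fun p _ ↦ hper p.1
  exact le_mul_logb_of_two_pow_le_sum_choose hk hS
    ((two_pow_card_le_card_traces hK).trans (card_traces_le hVC _))
end

section
/- In the construction of Theorem A (lower bound), the hypothesis class H_n = {h_Z : Z ⊆ [n]} on ℝ, where h_Z(x) = 1 iff x = x_j + r/(p_{f(Z)})^m for some j ∈ Z and m ∈ ℕ (with x₁,…,x_n pairwise at distance > 2r(1+g), p_i an enumeration of primes, and f : 2^{[n]} → [2^n] injective), has VC dimension exactly 1: every point of ℝ is labeled 1 by at most one hypothesis in H_n, hence no 2-point set is shattered, while some 1-point set is. -/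
/-!
A point `x j + r / q ^ m` determines its centre `x j`, because the offsets `r / q ^ m` lie in
`(0, r)` while distinct centres are at least `r` apart; it then determines the prime power
`q ^ m`, hence the prime `q`. So every point lies in the 1-set of at most one hypothesis, which
rules out realising both `{a}` and `{a, b}` on a pair `{a, b}`.
-/

/-- A set system `F` on `Z` shatters the finite set `K`. -/
def ShattersSys {Z : Type*} (F : Set (Set Z)) (K : Finset Z) : Prop :=
  ∀ T ⊆ K, ∃ A ∈ F, ∀ z ∈ K, (z ∈ A ↔ z ∈ T)

open Finset

def invPowShifts {ι : Type*} (x : ι → ℝ) (r : ℝ) (q : ℕ) (S : Finset ι) : Set ℝ :=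
  {t | ∃ j ∈ S, ∃ m : ℕ, 0 < m ∧ t = x j + r / (q : ℝ) ^ m}

lemma div_pow_mem_Ioo {r : ℝ} (hr : 0 < r) {q m : ℕ} (hq : 2 ≤ q) (hm : 0 < m) :
    r / (q : ℝ) ^ m ∈ Set.Ioo 0 r := by
  have hq1 : (1 : ℝ) < q := by exact_mod_cast hq
  exact ⟨by positivity, div_lt_self hr (one_lt_pow₀ hq1 hm.ne')⟩

lemma eq_of_mem_invPowShifts {ι : Type*} {x : ι → ℝ} {r : ℝ} (hr : 0 < r)
    (hsep : ∀ j j', j ≠ j' → r ≤ |x j - x j'|) {q q' : ℕ} (hq : q.Prime) (hq' : q'.Prime)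
    {S S' : Finset ι} {t : ℝ} (ht : t ∈ invPowShifts x r q S)
    (ht' : t ∈ invPowShifts x r q' S') : q = q' := by
  obtain ⟨j, -, m, hm, rfl⟩ := ht
  obtain ⟨j', -, m', hm', heq⟩ := ht'
  obtain ⟨ha₀, ha₁⟩ := div_pow_mem_Ioo hr hq.two_le hm
  obtain ⟨hb₀, hb₁⟩ := div_pow_mem_Ioo hr hq'.two_le hm'
  have hj : j = j' := by
    by_contra hne
    have hdiff : x j - x j' = r / (q' : ℝ) ^ m' - r / (q : ℝ) ^ m := by linarith
    have hclose : |x j - x j'| < r :=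
      hdiff ▸ abs_sub_lt_of_nonneg_of_lt hb₀.le hb₁ ha₀.le ha₁
    exact (hsep j j' hne).not_gt hclose
  subst hj
  have hpow : (q : ℝ) ^ m = (q' : ℝ) ^ m' := by
    simpa only [div_eq_mul_inv, mul_right_inj' hr.ne', inv_inj] using add_left_cancel heq
  exact (hq.pow_inj' hq' hm.ne' hm'.ne' (by exact_mod_cast hpow)).1

section Shattering

variable {α : Type*} {F : Set (Set α)}

lemma ShattersSys.card_le_one (hF : ∀ t, ∀ A ∈ F, ∀ B ∈ F, t ∈ A → t ∈ B → A = B)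
    {K : Finset α} (hK : ShattersSys F K) : K.card ≤ 1 := by
  classical
  by_contra! hcard
  obtain ⟨a, ha, b, hb, hab⟩ := one_lt_card.mp hcard
  obtain ⟨A, hA, hAK⟩ := hK {a} (singleton_subset_iff.mpr ha)
  obtain ⟨B, hB, hBK⟩ := hK {a, b} (insert_subset ha (singleton_subset_iff.mpr hb))
  have haA : a ∈ A := (hAK a ha).mpr (mem_singleton_self a)
  have haB : a ∈ B := (hBK a ha).mpr (mem_insert_self a _)
  have hbA : b ∈ A := hF a A hA B hB haA haB ▸ (hBK b hb).mpr (by simp)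
  exact hab (mem_singleton.mp ((hAK b hb).mp hbA)).symm

lemma shattersSys_singleton {a : α} (hout : ∃ A ∈ F, a ∉ A) (hin : ∃ A ∈ F, a ∈ A) :
    ShattersSys F {a} := by
  intro T hT
  rcases subset_singleton_iff.mp hT with rfl | rfl
  · obtain ⟨A, hA, haA⟩ := hout
    exact ⟨A, hA, by simpa using haA⟩
  · obtain ⟨A, hA, haA⟩ := hin
    exact ⟨A, hA, by simpa using haA⟩

end Shattering

theorem stmt16_general (r g : ℝ) (hr : 0 < r) (hg : 0 < g) (n : ℕ) (hn : 0 < n)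
    (x : Fin n → ℝ) (hx : ∀ j j', j ≠ j' → 2 * r * (1 + g) < |x j - x j'|)
    (p : ℕ → ℕ) (hp : ∀ i, Nat.Prime (p i)) (hpmono : StrictMono p)
    (f : Finset (Fin n) → ℕ) (hfinj : Function.Injective f) :
    let Hn : Set (Set ℝ) :=
      {A | ∃ Z : Finset (Fin n),
        A = {t | ∃ j ∈ Z, ∃ m : ℕ, 0 < m ∧ t = x j + r / ((p (f Z) : ℝ)) ^ m}}
    (∀ t : ℝ, ∀ A ∈ Hn, ∀ B ∈ Hn, t ∈ A → t ∈ B → A = B) ∧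
    (∀ K : Finset ℝ, ShattersSys Hn K → K.card ≤ 1) ∧
    (∃ K : Finset ℝ, K.card = 1 ∧ ShattersSys Hn K) := by
  intro Hn
  have hsep : ∀ j j', j ≠ j' → r ≤ |x j - x j'| := fun j j' hne => by
    nlinarith [hx j j' hne]
  have hdisj : ∀ t : ℝ, ∀ A ∈ Hn, ∀ B ∈ Hn, t ∈ A → t ∈ B → A = B := by
    rintro t _ ⟨Z, rfl⟩ _ ⟨Z', rfl⟩ ht ht'
    have hq := eq_of_mem_invPowShifts hr hsep (hp _) (hp _) ht ht'
    rw [hfinj (hpmono.injective hq)]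
  refine ⟨hdisj, fun K => ShattersSys.card_le_one hdisj, ?_⟩
  let j₀ : Fin n := ⟨0, hn⟩
  refine ⟨{x j₀ + r / (p (f {j₀}) : ℝ) ^ 1}, card_singleton _, shattersSys_singleton ?_ ?_⟩
  · exact ⟨_, ⟨∅, rfl⟩, by simp⟩
  · exact ⟨_, ⟨{j₀}, rfl⟩, j₀, mem_singleton_self j₀, 1, one_pos, rfl⟩

/-- The lower-bound construction of Theorem A: the class
`H_n = {h_Z : Z ⊆ [n]}` on `ℝ`, where the 1-set of `h_Z` is
`{x_j + r/(p_{f(Z)})^m : j ∈ Z, m ≥ 1}`, has VC dimension exactly 1: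
distinct hypotheses have disjoint 1-sets (every point is labeled 1 by at most one
hypothesis), hence no 2-point set is shattered, while some 1-point set is. -/
theorem stmt16 (r g : ℝ) (hr : 0 < r) (hg : 0 < g) (n : ℕ) (hn : 0 < n)
    (x : Fin n → ℝ) (hx : ∀ j j', j ≠ j' → 2 * r * (1 + g) < |x j - x j'|)
    (p : ℕ → ℕ) (hp : ∀ i, Nat.Prime (p i)) (hpmono : StrictMono p)
    (f : Finset (Fin n) → ℕ) (hfinj : Function.Injective f)
    (hf1 : ∀ Z, 1 ≤ f Z) (hf2 : ∀ Z, f Z ≤ 2 ^ n) :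
    let Hn : Set (Set ℝ) :=
      {A | ∃ Z : Finset (Fin n),
        A = {t | ∃ j ∈ Z, ∃ m : ℕ, 0 < m ∧ t = x j + r / ((p (f Z) : ℝ)) ^ m}}
    (∀ t : ℝ, ∀ A ∈ Hn, ∀ B ∈ Hn, t ∈ A → t ∈ B → A = B) ∧
    (∀ K : Finset ℝ, ShattersSys Hn K → K.card ≤ 1) ∧
    (∃ K : Finset ℝ, K.card = 1 ∧ ShattersSys Hn K) :=
  stmt16_general r g hr hg n hn x hx p hp hpmono f hfinj
end
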